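/- arXiv:1404.2895 — 3 statements merged into one kernel-verified Lean document; each statement's English description precedes it below -/
import Mathlib

section
/- Let F be a finite s-uniform hypergraph, let p ∈ (0,1), and let (z_i)_{i ∈ V(F)} be independent Bernoulli random variables with Pr[z_i = 1] = p for all i. Let F' be the random subhypergraph F' = {A ∈ F : z_i = 1 for all i ∈ A}. Suppose there exists α > 0 such that |F|·p^{(1−α)s} < 1. Then for any c ≥ e·2^s·s·α, Pr[τ(F') > s²·(c/α)^{s+1}] ≤ s²·|V(F)|^{s−1}·p^c. -/
/-!
If `τ(F') > s k`, then `F'` contains `k + 1` pairwise disjoint edges, because the vertex set of a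
maximum matching of `F'` is a transversal. A fixed family of `k + 1` disjoint edges of `F` survives
with probability `p^{s(k+1)}` and there are at most `|F|^{k+1}` such families, so the union bound
gives `Pr[τ(F') > s k] ≤ (|F| p^s)^{k+1} ≤ p^{α s (k+1)}` by `|F| p^{(1-α)s} < 1`. Taking
`k = ⌊c/α⌋` makes `s k ≤ s² (c/α)^{s+1}` and `α s (k+1) ≥ c`.
-/

/-- A finite hypergraph on vertex type `V`. -/
structure FinHypergraph (V : Type) [DecidableEq V] where
  verts : Finset V
  edges : Finset (Finset V)
  edge_sub : ∀ e ∈ edges, e ⊆ verts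

variable {V W : Type} [DecidableEq V] [DecidableEq W]

/-- The number of edges of `G` of size `j` containing the set `A`. -/
def FinHypergraph.degJ (G : FinHypergraph V) (j : ℕ) (A : Finset V) : ℕ :=
  (G.edges.filter fun e => A ⊆ e ∧ e.card = j).card

/-- `G` admits a proper coloring with `n` colors: no edge is monochromatic. -/
def FinHypergraph.Colorable (G : FinHypergraph V) (n : ℕ) : Prop :=
  ∃ c : V → ℕ, (∀ v ∈ G.verts, c v < n) ∧
    ∀ e ∈ G.edges, ∃ u ∈ e, ∃ w ∈ e, c u ≠ c w

/-- `S` is (the edge set of) a subhypergraph of `G` isomorphic to `H` via an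
isomorphism sending `v` to `u`. -/
def FinHypergraph.IsCopyAt (H : FinHypergraph W) (G : FinHypergraph V) (v : W) (u : V)
    (S : Finset (Finset V)) : Prop :=
  S ⊆ G.edges ∧ ∃ φ : W → V, Set.InjOn φ ↑H.verts ∧ φ v = u ∧
    H.verts.image φ = S.sup id ∧
    ∀ E : Finset W, E ⊆ H.verts → (E ∈ H.edges ↔ E.image φ ∈ S)

/-- The number of subhypergraphs of `G` isomorphic to `H` via an isomorphism
sending `v` to `u`. -/
noncomputable def FinHypergraph.copyCount (H : FinHypergraph W) (G : FinHypergraph V)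
    (v : W) (u : V) : ℕ :=
  Set.ncard {S : Finset (Finset V) | H.IsCopyAt G v u S}

/-- `Δ_{H,v}(G)`. -/
noncomputable def FinHypergraph.DeltaHv (H : FinHypergraph W) (G : FinHypergraph V) (v : W) : ℕ :=
  G.verts.sup (H.copyCount G v)

/-- `Δ_H(G) = min_{v ∈ V(H)} Δ_{H,v}(G)`. -/
noncomputable def FinHypergraph.DeltaH (H : FinHypergraph W) (G : FinHypergraph V) : ℕ :=
  sInf (H.DeltaHv G '' ↑H.verts)

/-- `Δ_H(G) ≤ D`. -/
def FinHypergraph.DeltaHLe (H : FinHypergraph W) (G : FinHypergraph V) (D : ℝ) : Prop :=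
  ∃ v ∈ H.verts, ∀ u ∈ G.verts, (H.copyCount G v u : ℝ) ≤ D

/-- The edge set `E` contains a subhypergraph isomorphic to `H`. -/
def FinHypergraph.HasCopy (H : FinHypergraph W) (E : Finset (Finset V)) : Prop :=
  ∃ S ⊆ E, ∃ φ : W → V, Set.InjOn φ ↑H.verts ∧
    H.verts.image φ = S.sup id ∧
    ∀ A : Finset W, A ⊆ H.verts → (A ∈ H.edges ↔ A.image φ ∈ S)

/-- The subhypergraph of `G` induced by `S`. -/
def FinHypergraph.induced (G : FinHypergraph V) (S : Finset V) : FinHypergraph V where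
  verts := G.verts ∩ S
  edges := G.edges.filter fun e => e ⊆ S
  edge_sub := by
    intro e he
    rw [Finset.mem_filter] at he
    exact Finset.subset_inter (G.edge_sub e he.1) he.2

/-- `G` is `(Δ, w 2, …, w k)`-sparse. -/
def FinHypergraph.Sparse (G : FinHypergraph V) (k : ℕ) (Δ : ℝ) (w : ℕ → ℝ) : Prop :=
  (∀ u ∈ G.verts, (G.degJ k {u} : ℝ) ≤ Δ) ∧
    ∀ j l : ℕ, 1 ≤ l → l < j → j ≤ k → ∀ A ⊆ G.verts, A.card = l →
      (G.degJ j A : ℝ) ≤ Δ ^ (((j : ℝ) - l) / ((k : ℝ) - 1)) * w j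

/-- The maximum `(j,l)`-degree of `G`. -/
def FinHypergraph.maxDegJL (G : FinHypergraph V) (j l : ℕ) : ℕ :=
  (G.verts.powersetCard l).sup (G.degJ j)

/-- `H` is a triangle. -/
def FinHypergraph.IsTriangle (H : FinHypergraph W) : Prop :=
  ∃ e f g : Finset W, ∃ u v w : W,
    H.edges = {e, f, g} ∧ H.verts = e ∪ f ∪ g ∧
    e ≠ f ∧ f ≠ g ∧ e ≠ g ∧ u ≠ v ∧ v ≠ w ∧ u ≠ w ∧
    u ∈ e ∧ v ∈ e ∧ v ∈ f ∧ w ∈ f ∧ w ∈ g ∧ u ∈ g ∧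
    ({u, v, w} : Finset W) ∩ e ∩ f ∩ g = ∅

/-- `G` contains a triangle. -/
def FinHypergraph.ContainsTriangle (G : FinHypergraph V) : Prop :=
  ∃ e ∈ G.edges, ∃ f ∈ G.edges, ∃ g ∈ G.edges, ∃ u v w : V,
    e ≠ f ∧ f ≠ g ∧ e ≠ g ∧ u ≠ v ∧ v ≠ w ∧ u ≠ w ∧
    u ∈ e ∧ v ∈ e ∧ v ∈ f ∧ w ∈ f ∧ w ∈ g ∧ u ∈ g ∧
    ({u, v, w} : Finset V) ∩ e ∩ f ∩ g = ∅

/-- The hypergraph `H` is connected. -/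
def FinHypergraph.Connected (H : FinHypergraph W) : Prop :=
  ∀ u ∈ H.verts, ∀ v ∈ H.verts, ∃ n : ℕ, ∃ e : Fin (n + 1) → Finset W,
    (∀ i, e i ∈ H.edges) ∧ u ∈ e 0 ∧ v ∈ e (Fin.last n) ∧
    ∀ i : Fin n, (e i.castSucc ∩ e i.succ).Nonempty

/-- The edge set `S` forms a connected hypergraph (on the union of its edges). -/
def ConnectedEdges (S : Finset (Finset V)) : Prop :=
  ∀ u ∈ S.sup id, ∀ v ∈ S.sup id, ∃ n : ℕ, ∃ e : Fin (n + 1) → Finset V,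
    (∀ i, e i ∈ S) ∧ u ∈ e 0 ∧ v ∈ e (Fin.last n) ∧
    ∀ i : Fin n, (e i.castSucc ∩ e i.succ).Nonempty

/-- The transversal number of the hypergraph with vertex set `F.verts` and edge set `E`. -/
noncomputable def FinHypergraph.tau (F : FinHypergraph V) (E : Finset (Finset V)) : ℕ :=
  sInf {n : ℕ | ∃ K : Finset V, K ⊆ F.verts ∧ K.card = n ∧ ∀ A ∈ E, (A ∩ K).Nonempty}

/-- The link of `A` in `F`. -/
def FinHypergraph.link (F : FinHypergraph V) (A : Finset V) : Finset (Finset V) :=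
  (F.edges.filter fun B => A ⊆ B).image fun B => B \ A

open MeasureTheory ProbabilityTheory
open Finset
open scoped ENNReal

theorem measure_forall_mem_eq_true {ι Ω : Type*} [MeasurableSpace Ω] {μ : Measure Ω}
    {S : Finset ι} {z : ι → Ω → Bool} (hindep : iIndepFun (fun i : S => z i) μ) {q : ℝ≥0∞}
    (hq : ∀ i ∈ S, μ {ω | z i ω = true} = q) {U : Finset ι} (hU : U ⊆ S) :
    μ {ω | ∀ i ∈ U, z i ω = true} = q ^ #U := by
  classical
  have hset : {ω | ∀ i ∈ U, z i ω = true} =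
      ⋂ i ∈ U.subtype (· ∈ S), (fun j : S => z j) i ⁻¹' {true} := by
    ext ω
    simp only [Set.mem_ofPred_eq, Set.mem_iInter, mem_subtype, Set.mem_preimage,
      Set.mem_singleton_iff, Subtype.forall]
    exact ⟨fun h i _ hi => h i hi, fun h i hi => h i (hU hi) hi⟩
  rw [hset, hindep.measure_inter_preimage_eq_mul _ fun _ _ => measurableSet_singleton true]
  exact (prod_congr rfl fun (i : S) _ => hq i i.2).trans
    (by rw [prod_const, card_subtype, filter_true_of_mem hU])

namespace FinHypergraph

theorem tau_le_card (F : FinHypergraph V) {E : Finset (Finset V)} {K : Finset V}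
    (hK : K ⊆ F.verts) (hKE : ∀ A ∈ E, (A ∩ K).Nonempty) : F.tau E ≤ #K :=
  Nat.sInf_le ⟨K, hK, rfl, hKE⟩

theorem tau_le_of_matching_card_le (F : FinHypergraph V) {E : Finset (Finset V)} {s k : ℕ}
    (hE : E ⊆ F.edges) (hne : ∀ A ∈ E, A.Nonempty) (hcard : ∀ A ∈ E, #A ≤ s)
    (hmatch : ∀ M ⊆ E, (M : Set (Finset V)).PairwiseDisjoint id → #M ≤ k) :
    F.tau E ≤ s * k := by
  classical
  obtain ⟨M, hM, hMmax⟩ := (E.powerset.filter fun M : Finset (Finset V) =>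
    (M : Set (Finset V)).PairwiseDisjoint id).exists_max_image card ⟨∅, by simp⟩
  simp only [mem_filter, mem_powerset] at hM hMmax
  obtain ⟨hME, hMdisj⟩ := hM
  have htrans : ∀ A ∈ E, (A ∩ M.biUnion id).Nonempty := by
    intro A hA
    by_contra hdisj
    rw [not_nonempty_iff_eq_empty, ← disjoint_iff_inter_eq_empty] at hdisj
    have hAM : A ∉ M := fun h => (hne A hA).ne_empty
      (disjoint_self.1 (hdisj.mono_right (subset_biUnion_of_mem id h)))
    have hins := hMmax (insert A M) ⟨insert_subset hA hME, by
      rw [coe_insert]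
      exact hMdisj.insert fun B hB _ => hdisj.mono_right (subset_biUnion_of_mem id hB)⟩
    rw [card_insert_of_notMem hAM] at hins
    omega
  calc F.tau E ≤ #(M.biUnion id) :=
        F.tau_le_card (biUnion_subset.2 fun A hA => F.edge_sub A (hE (hME hA))) htrans
    _ ≤ #M * s := card_biUnion_le_card_mul _ _ _ fun A hA => hcard A (hME hA)
    _ ≤ s * k := by rw [mul_comm]; exact Nat.mul_le_mul_left s (hmatch M hME hMdisj)

theorem exists_matching_of_mul_lt_tau (F : FinHypergraph V) {E : Finset (Finset V)} {s k : ℕ}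
    (hE : E ⊆ F.edges) (hne : ∀ A ∈ E, A.Nonempty) (hcard : ∀ A ∈ E, #A ≤ s)
    (hτ : s * k < F.tau E) :
    ∃ M ⊆ E, #M = k + 1 ∧ (M : Set (Finset V)).PairwiseDisjoint id := by
  by_contra! hno
  refine hτ.not_ge (F.tau_le_of_matching_card_le hE hne hcard fun M hME hM => ?_)
  by_contra! hk
  obtain ⟨N, hNM, hN⟩ := exists_subset_card_eq (show k + 1 ≤ #M by omega)
  exact hno N (hNM.trans hME) hN (hM.subset hNM)

variable {Ω : Type*} [MeasurableSpace Ω] {μ : Measure Ω} {z : V → Ω → Bool} {q : ℝ≥0∞}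

theorem measure_exists_surviving_matching_le (F : FinHypergraph V) {s : ℕ}
    (hunif : ∀ A ∈ F.edges, #A = s) (hindep : iIndepFun (fun i : F.verts => z i) μ)
    (hq : ∀ i ∈ F.verts, μ {ω | z i ω = true} = q) (m : ℕ) :
    μ {ω | ∃ M ⊆ F.edges, #M = m ∧ (M : Set (Finset V)).PairwiseDisjoint id ∧
        ∀ A ∈ M, ∀ i ∈ A, z i ω = true} ≤ (#F.edges : ℝ≥0∞) ^ m * q ^ (s * m) := by
  classical
  set matchings := (F.edges.powersetCard m).filter fun M : Finset (Finset V) =>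
    (M : Set (Finset V)).PairwiseDisjoint id
  have hsurvive : ∀ M ∈ matchings, μ {ω | ∀ i ∈ M.biUnion id, z i ω = true} = q ^ (s * m) := by
    intro M hM
    obtain ⟨⟨hME, hMm⟩, hMdisj⟩ := mem_filter.1 hM |>.imp_left mem_powersetCard.1
    rw [measure_forall_mem_eq_true hindep hq (U := M.biUnion id)
        (biUnion_subset.2 fun A hA => F.edge_sub A (hME hA)), card_biUnion hMdisj,
      sum_congr rfl fun A hA => show #(id A) = s from hunif A (hME hA), sum_const, smul_eq_mul, hMm,
      mul_comm]
  have hcount : #matchings ≤ #F.edges ^ m :=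
    (card_filter_le _ _).trans ((card_powersetCard _ _).trans_le (Nat.choose_le_pow _ _))
  calc _ ≤ μ (⋃ M ∈ matchings, {ω | ∀ i ∈ M.biUnion id, z i ω = true}) := by
        refine measure_mono ?_
        rintro ω ⟨M, hME, hMm, hMdisj, hM⟩
        simp only [Set.mem_iUnion, Set.mem_ofPred_eq, mem_biUnion, id_eq]
        exact ⟨M, mem_filter.2 ⟨mem_powersetCard.2 ⟨hME, hMm⟩, hMdisj⟩,
          fun i ⟨A, hA, hi⟩ => hM A hA i hi⟩
    _ ≤ ∑ M ∈ matchings, μ {ω | ∀ i ∈ M.biUnion id, z i ω = true} :=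
        measure_biUnion_finset_le _ _
    _ = #matchings * q ^ (s * m) := by rw [sum_congr rfl hsurvive, sum_const, nsmul_eq_mul]
    _ ≤ _ := by gcongr; exact_mod_cast hcount

theorem measure_mul_lt_tau_le (F : FinHypergraph V) {s : ℕ} (hs : 1 ≤ s)
    (hunif : ∀ A ∈ F.edges, #A = s) (hindep : iIndepFun (fun i : F.verts => z i) μ)
    (hq : ∀ i ∈ F.verts, μ {ω | z i ω = true} = q) (k : ℕ) :
    μ {ω | s * k < F.tau (F.edges.filter fun A => ∀ i ∈ A, z i ω = true)} ≤
      (#F.edges : ℝ≥0∞) ^ (k + 1) * q ^ (s * (k + 1)) := by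
  refine (measure_mono fun ω hω => ?_).trans
    (F.measure_exists_surviving_matching_le hunif hindep hq (k + 1))
  obtain ⟨M, hME, hMk, hMdisj⟩ := F.exists_matching_of_mul_lt_tau (filter_subset _ _)
    (fun A hA => card_pos.1 (by rw [hunif A (mem_filter.1 hA).1]; omega))
    (fun A hA => (hunif A (mem_filter.1 hA).1).le) hω
  exact ⟨M, hME.trans (filter_subset _ _), hMk, hMdisj, fun A hA => (mem_filter.1 (hME hA)).2⟩

end FinHypergraph

theorem card_mul_pow_pow_le_rpow {N s k : ℕ} {p α c : ℝ} (hp0 : 0 < p) (hp1 : p < 1)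
    (hsize : (N : ℝ) * p ^ ((1 - α) * s) < 1) (hc : c ≤ α * s * (k + 1)) :
    ((N : ℝ) * p ^ s) ^ (k + 1) ≤ p ^ c := by
  have hbase : (N : ℝ) * p ^ s ≤ p ^ (α * s) := by
    calc (N : ℝ) * p ^ s = N * p ^ ((1 - α) * s) * p ^ (α * s) := by
          rw [mul_assoc, ← Real.rpow_add hp0, ← Real.rpow_natCast]; ring_nf
      _ ≤ p ^ (α * s) := mul_le_of_le_one_left (by positivity) hsize.le
  calc ((N : ℝ) * p ^ s) ^ (k + 1) ≤ (p ^ (α * s)) ^ (k + 1) := by gcongr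
    _ = p ^ (α * s * (k + 1)) := by rw [← Real.rpow_natCast, ← Real.rpow_mul hp0.le]; norm_cast
    _ ≤ p ^ c := Real.rpow_le_rpow_of_exponent_ge hp0 hp1.le hc

theorem exists_nat_mul_le_and_le_mul {s : ℕ} (hs : 1 ≤ s) {α c : ℝ} (hα : 0 < α)
    (hαc : α ≤ c) : ∃ k : ℕ, (s : ℝ) * k ≤ s ^ 2 * (c / α) ^ (s + 1) ∧ c ≤ α * s * (k + 1) := by
  have hx : 1 ≤ c / α := (one_le_div hα).2 hαc
  have hs' : (1 : ℝ) ≤ s := by exact_mod_cast hs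
  refine ⟨⌊c / α⌋₊, ?_, ?_⟩
  · calc (s : ℝ) * ⌊c / α⌋₊ ≤ s * (c / α) := by gcongr; exact Nat.floor_le (by positivity)
      _ ≤ s * (s * (c / α) ^ (s + 1)) := by
        gcongr
        exact (le_self_pow₀ hx (by omega)).trans (le_mul_of_one_le_left (by positivity) hs')
      _ = s ^ 2 * (c / α) ^ (s + 1) := by ring
  · calc c = α * (c / α) := by field_simp
      _ ≤ α * (⌊c / α⌋₊ + 1) := by gcongr; exact (Nat.lt_floor_add_one _).le
      _ ≤ α * s * (⌊c / α⌋₊ + 1) := by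
        rw [mul_right_comm]
        exact le_mul_of_one_le_right (by positivity) hs'

theorem statement_4_general (V : Type) [DecidableEq V] (s : ℕ) (F : FinHypergraph V)
    (hunif : ∀ e ∈ F.edges, e.card = s)
    (p : ℝ) (hp0 : 0 < p) (hp1 : p < 1)
    {Ω : Type} [MeasurableSpace Ω] (μ : Measure Ω)
    (z : V → Ω → Bool)
    (hindep : iIndepFun (fun i : F.verts => z i) μ)
    (hbern : ∀ i ∈ F.verts, μ {ω | z i ω = true} = ENNReal.ofReal p)
    (α : ℝ) (hα : 0 < α)
    (hsize : (F.edges.card : ℝ) * p ^ ((1 - α) * s) < 1)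
    (c : ℝ) (hc : Real.exp 1 * 2 ^ s * s * α ≤ c) :
    μ {ω | ((s : ℝ) ^ 2 * (c / α) ^ (s + 1) <
        (F.tau (F.edges.filter fun A => ∀ i ∈ A, z i ω = true) : ℝ))} ≤
      ENNReal.ofReal ((s : ℝ) ^ 2 * (F.verts.card : ℝ) ^ (s - 1) * p ^ c) := by
  rcases F.edges.eq_empty_or_nonempty with hF | ⟨e, he⟩
  · have hτ : ∀ ω, F.tau (F.edges.filter fun A => ∀ i ∈ A, z i ω = true) = 0 := fun ω =>
      Nat.le_zero.1 (F.tau_le_card (K := ∅) (empty_subset _) (by simp [hF]))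
    have hc0 : 0 ≤ c := (by positivity : 0 ≤ Real.exp 1 * 2 ^ s * s * α).trans hc
    have hthreshold : ¬ (s : ℝ) ^ 2 * (c / α) ^ (s + 1) < 0 := not_lt.2 (by positivity)
    simp [hτ, hthreshold]
  have hs : 1 ≤ s := by
    by_contra! hs0
    have hcard : (#F.edges : ℝ) < 1 := by simpa [Nat.lt_one_iff.1 hs0] using hsize
    exact absurd (card_pos.2 ⟨e, he⟩) (by exact_mod_cast hcard.not_ge)
  have hV : 1 ≤ #F.verts := hs.trans ((hunif e he).symm.trans_le (card_le_card (F.edge_sub e he)))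
  have hαc : α ≤ c := le_trans (le_mul_of_one_le_left hα.le (one_le_mul_of_one_le_of_one_le
    (one_le_mul_of_one_le_of_one_le (Real.one_le_exp zero_le_one) (one_le_pow₀ one_le_two))
    (by exact_mod_cast hs))) hc
  obtain ⟨k, hk, hck⟩ := exists_nat_mul_le_and_le_mul hs hα hαc
  calc _ ≤ μ {ω | s * k < F.tau (F.edges.filter fun A => ∀ i ∈ A, z i ω = true)} :=
        measure_mono fun ω hω => by exact_mod_cast hk.trans_lt hω
    _ ≤ (#F.edges : ℝ≥0∞) ^ (k + 1) * ENNReal.ofReal p ^ (s * (k + 1)) :=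
        F.measure_mul_lt_tau_le hs hunif hindep hbern k
    _ = ENNReal.ofReal (((#F.edges : ℝ) * p ^ s) ^ (k + 1)) := by
        rw [mul_pow, ← pow_mul, ENNReal.ofReal_mul (by positivity), ENNReal.ofReal_pow hp0.le,
          ENNReal.ofReal_pow (by positivity), ENNReal.ofReal_natCast]
    _ ≤ ENNReal.ofReal (p ^ c) :=
        ENNReal.ofReal_le_ofReal (card_mul_pow_pow_le_rpow hp0 hp1 hsize hck)
    _ ≤ _ := ENNReal.ofReal_le_ofReal (le_mul_of_one_le_left (by positivity)
        (one_le_mul_of_one_le_of_one_le (one_le_pow₀ (by exact_mod_cast hs))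
          (one_le_pow₀ (by exact_mod_cast hV))))

/-- Lemma `hittinglemma`: let `F` be an `s`-uniform hypergraph and
let `(z_i)_{i ∈ V(F)}` be independent Bernoulli(`p`) random variables. Let
`F' = {A ∈ F : z_i = 1 for all i ∈ A}`. If there is `α > 0` with
`|F| p^{(1-α)s} < 1`, then for any `c ≥ e 2^s s α`,
`Pr[τ(F') > s² (c/α)^{s+1}] ≤ s² |V(F)|^{s-1} p^c`. -/
theorem statement_4 (V : Type) [DecidableEq V] (s : ℕ) (F : FinHypergraph V)
    (hunif : ∀ e ∈ F.edges, e.card = s)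
    (p : ℝ) (hp0 : 0 < p) (hp1 : p < 1)
    {Ω : Type} [MeasurableSpace Ω] (μ : Measure Ω) [IsProbabilityMeasure μ]
    (z : V → Ω → Bool) (hmeas : ∀ i ∈ F.verts, Measurable (z i))
    (hindep : iIndepFun (fun i : F.verts => z i) μ)
    (hbern : ∀ i ∈ F.verts, μ {ω | z i ω = true} = ENNReal.ofReal p)
    (α : ℝ) (hα : 0 < α)
    (hsize : (F.edges.card : ℝ) * p ^ ((1 - α) * s) < 1)
    (c : ℝ) (hc : Real.exp 1 * 2 ^ s * s * α ≤ c) :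
    μ {ω | ((s : ℝ) ^ 2 * (c / α) ^ (s + 1) <
        (F.tau (F.edges.filter fun A => ∀ i ∈ A, z i ω = true) : ℝ))} ≤
      ENNReal.ofReal ((s : ℝ) ^ 2 * (F.verts.card : ℝ) ^ (s - 1) * p ^ c) :=
  statement_4_general V s F hunif p hp0 hp1 μ z hindep hbern α hα hsize c hc
end

section
/- Let k ≥ 1 and let F be a finite k-uniform hypergraph with at least one edge. Then there exists a set A ⊆ V(F) with |A| ≤ k−1 such that the link hypergraph L_F(A) contains a matching of size at least |F|^{1/k}/(k−|A|). -/
variable {V W : Type} [DecidableEq V] [DecidableEq W]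

/-
If a maximal matching `M` of `F` is large, `A = ∅` works. Otherwise the at most `k |M|`
vertices covered by `M` meet every edge, so one of them, `v`, lies in at least
`|F| / (k |M|) ≥ |F|^{(k-1)/k}` edges. The link of `v` is `(k-1)`-uniform with that many
edges, and induction on `k` applied to it yields a set `A'`; then `A = A' ∪ {v}` works,
because the link of `A'` in the link of `v` is the link of `A` in `F`.
-/

open Finset

namespace FinHypergraph

def linkHypergraph (F : FinHypergraph V) (A : Finset V) : FinHypergraph V where
  verts := F.verts \ A
  edges := F.link A
  edge_sub := by
    simp only [link, mem_image, mem_filter]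
    rintro _ ⟨B, ⟨hB, -⟩, rfl⟩
    exact sdiff_subset_sdiff (F.edge_sub B hB) subset_rfl

variable {F : FinHypergraph V} {A B S : Finset V}

lemma mem_link : S ∈ F.link A ↔ ∃ B ∈ F.edges, A ⊆ B ∧ B \ A = S := by
  simp only [link, mem_image, mem_filter, and_assoc]

@[simp]
lemma link_empty : F.link ∅ = F.edges := by
  simp [link]

lemma card_link : (F.link A).card = (F.edges.filter (A ⊆ ·)).card := by
  refine card_image_of_injOn fun B₁ h₁ B₂ h₂ h => ?_
  rw [coe_filter] at h₁ h₂
  rw [← sdiff_union_of_subset h₁.2, ← sdiff_union_of_subset h₂.2]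
  exact congrArg (· ∪ A) h

lemma card_link_singleton (v : V) : (F.link {v}).card = (F.edges.filter (v ∈ ·)).card := by
  simp only [card_link, singleton_subset_iff]

lemma card_of_mem_link {k : ℕ} (hunif : ∀ e ∈ F.edges, e.card = k) (hS : S ∈ F.link A) :
    S.card = k - A.card := by
  obtain ⟨B, hB, hAB, rfl⟩ := mem_link.1 hS
  rw [card_sdiff_of_subset hAB, hunif B hB]

lemma link_linkHypergraph (h : Disjoint A B) :
    (F.linkHypergraph A).link B = F.link (A ∪ B) := by
  ext S
  rw [mem_link, mem_link]
  constructor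
  · rintro ⟨_, hCA, hBC, rfl⟩
    obtain ⟨C, hC, hAC, rfl⟩ := mem_link.1 hCA
    exact ⟨C, hC, union_subset hAC (subset_sdiff.1 hBC).1, sdiff_sdiff_left.symm⟩
  · rintro ⟨C, hC, hABC, rfl⟩
    obtain ⟨hAC, hBC⟩ := union_subset_iff.1 hABC
    exact ⟨C \ A, mem_link.2 ⟨C, hC, hAC, rfl⟩, subset_sdiff.2 ⟨hBC, h.symm⟩, sdiff_sdiff_left⟩

end FinHypergraph

lemma Finset.exists_maximal_matching {α : Type*} [DecidableEq α] (E : Finset (Finset α))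
    (hE : ∀ e ∈ E, e.Nonempty) :
    ∃ M ⊆ E, (M : Set (Finset α)).PairwiseDisjoint id ∧ ∀ e ∈ E, ¬Disjoint e (M.sup id) := by
  classical
  obtain ⟨M, hM⟩ := exists_maximal (s := E.powerset.filter fun M : Finset (Finset α) ↦
    (M : Set (Finset α)).PairwiseDisjoint id) ⟨∅, by simp⟩
  simp only [mem_filter, mem_powerset] at hM
  obtain ⟨⟨hME, hMdisj⟩, hMmax⟩ := hM
  refine ⟨M, hME, hMdisj, fun e he hdisj ↦ ?_⟩
  rw [Finset.disjoint_sup_right] at hdisj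
  have hinsert : insert e M ⊆ M := hMmax ⟨insert_subset he hME, by
    rw [coe_insert]; exact hMdisj.insert fun f hf _ ↦ hdisj hf⟩ (subset_insert e M)
  exact (hE e he).ne_empty (disjoint_self.1 (hdisj (hinsert (mem_insert_self e M))))

lemma Finset.card_sup_le_card_mul {α : Type*} [DecidableEq α] {M : Finset (Finset α)} {k : ℕ}
    (hM : ∀ e ∈ M, e.card = k) : (M.sup id).card ≤ M.card * k := by
  rw [sup_eq_biUnion]
  exact card_biUnion_le_card_mul M id k fun e he ↦ (hM e he).le

lemma Finset.exists_card_le_card_mul_card_filter_mem {α : Type*} [DecidableEq α]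
    {E : Finset (Finset α)} {T : Finset α} (hE : E.Nonempty) (hT : ∀ e ∈ E, ¬Disjoint e T) :
    ∃ v ∈ T, E.card ≤ T.card * (E.filter (v ∈ ·)).card := by
  obtain ⟨e, he⟩ := hE
  have hTne : T.Nonempty := nonempty_iff_ne_empty.2 fun h ↦ hT e he (h ▸ disjoint_empty_right e)
  obtain ⟨v, hvT, hvmax⟩ := T.exists_max_image (fun u ↦ (E.filter (u ∈ ·)).card) hTne
  refine ⟨v, hvT, le_trans (card_le_card fun f hf ↦ ?_) (card_biUnion_le_card_mul T _ _ hvmax)⟩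
  obtain ⟨u, huf, huT⟩ := not_disjoint_iff.1 (hT f hf)
  exact mem_biUnion.2 ⟨u, huT, mem_filter.2 ⟨hf, huf⟩⟩

lemma Real.le_rpow_one_div_of_pow_succ_le_mul {x d : ℝ} {n : ℕ} (hx : 0 < x) (hn : n ≠ 0)
    (h : x ^ (n + 1) ≤ x * d) : x ≤ d ^ (1 / (n : ℝ)) := by
  have hpow : x ^ n ≤ d := le_of_mul_le_mul_left (by rwa [← pow_succ']) hx
  calc x = (x ^ n) ^ (1 / (n : ℝ)) := by rw [one_div, pow_rpow_inv_natCast hx.le hn]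
    _ ≤ d ^ (1 / (n : ℝ)) := rpow_le_rpow (by positivity) hpow (by positivity)

namespace FinHypergraph

lemma pairwiseDisjoint_edges_of_card_eq_one {F : FinHypergraph V}
    (hunif : ∀ e ∈ F.edges, e.card = 1) : (F.edges : Set (Finset V)).PairwiseDisjoint id := by
  intro e he f hf hef
  obtain ⟨a, rfl⟩ := card_eq_one.1 (hunif e he)
  obtain ⟨b, rfl⟩ := card_eq_one.1 (hunif f hf)
  exact disjoint_singleton.2 fun hab ↦ hef (hab ▸ rfl)

lemma exists_large_matching_or_large_link {n : ℕ} (hn : n ≠ 0) {F : FinHypergraph V}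
    (hunif : ∀ e ∈ F.edges, e.card = n + 1) (hne : F.edges.Nonempty) :
    (∃ M ⊆ F.edges, (M : Set (Finset V)).PairwiseDisjoint id ∧
      (F.edges.card : ℝ) ^ ((1 : ℝ) / (n + 1 : ℕ)) ≤ (n + 1 : ℕ) * M.card) ∨
    ∃ v ∈ F.verts, (F.link {v}).Nonempty ∧
      (F.edges.card : ℝ) ^ ((1 : ℝ) / (n + 1 : ℕ)) ≤ ((F.link {v}).card : ℝ) ^ (1 / (n : ℝ)) := by
  set m := F.edges.card
  obtain ⟨M, hMF, hMdisj, hMcover⟩ :=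
    exists_maximal_matching F.edges fun e he ↦ card_pos.1 (by rw [hunif e he]; omega)
  set x := (m : ℝ) ^ ((1 : ℝ) / (n + 1 : ℕ)) with hx
  by_cases hsmall : x ≤ (n + 1 : ℕ) * M.card
  · exact .inl ⟨M, hMF, hMdisj, hsmall⟩
  push Not at hsmall
  obtain ⟨v, hvT, hmv⟩ := exists_card_le_card_mul_card_filter_mem hne hMcover
  rw [← card_link_singleton] at hmv
  have hTM : (M.sup id).card ≤ M.card * (n + 1) :=
    card_sup_le_card_mul fun e he ↦ hunif e (hMF he)
  obtain ⟨e, he, hve⟩ := mem_sup.1 hvT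
  refine .inr ⟨v, F.edge_sub e (hMF he) hve,
    ⟨e \ {v}, mem_link.2 ⟨e, hMF he, singleton_subset_iff.2 hve, rfl⟩⟩, ?_⟩
  have hm : (0 : ℝ) < m := by exact_mod_cast hne.card_pos
  have hxm : x ^ (n + 1) = m := by rw [hx, one_div, Real.rpow_inv_natCast_pow hm.le n.succ_ne_zero]
  refine Real.le_rpow_one_div_of_pow_succ_le_mul (by positivity) hn ?_
  calc x ^ (n + 1) = m := hxm
    _ ≤ (M.sup id).card * (F.link {v}).card := by exact_mod_cast hmv
    _ ≤ (M.card * (n + 1 : ℕ) : ℕ) * (F.link {v}).card := by gcongr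
    _ ≤ x * (F.link {v}).card := by push_cast at hsmall ⊢; rw [mul_comm (M.card : ℝ)]; gcongr

theorem exists_large_matching_in_link {k : ℕ} (hk : 1 ≤ k) (F : FinHypergraph V)
    (hunif : ∀ e ∈ F.edges, e.card = k) (hne : F.edges.Nonempty) :
    ∃ A ⊆ F.verts, A.card ≤ k - 1 ∧ ∃ M ⊆ F.link A, (M : Set (Finset V)).PairwiseDisjoint id ∧
      (F.edges.card : ℝ) ^ ((1 : ℝ) / k) / ((k : ℝ) - A.card) ≤ M.card := by
  induction k, hk using Nat.le_induction generalizing F with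
  | base =>
    exact ⟨∅, empty_subset _, le_rfl, F.edges, link_empty.ge,
      pairwiseDisjoint_edges_of_card_eq_one hunif, by simp⟩
  | succ n hn IH =>
    rcases exists_large_matching_or_large_link (by omega) hunif hne with
      ⟨M, hMF, hMdisj, hM⟩ | ⟨v, hvF, hlink_ne, hlink⟩
    · refine ⟨∅, empty_subset _, Nat.zero_le _, M, hMF.trans link_empty.ge, hMdisj, ?_⟩
      rwa [card_empty, Nat.cast_zero, sub_zero, div_le_iff₀ (by positivity), mul_comm]
    obtain ⟨A', hA'V, hA'card, M', hM'link, hM'disj, hM'bound⟩ :=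
      IH (F.linkHypergraph {v}) (fun S hS ↦ card_of_mem_link hunif hS) hlink_ne
    obtain ⟨hA'F, hvA'⟩ := subset_sdiff.1 hA'V
    have hcard : ({v} ∪ A').card = A'.card + 1 := by
      rw [card_union_of_disjoint hvA'.symm, card_singleton, add_comm]
    refine ⟨{v} ∪ A', union_subset (singleton_subset_iff.2 hvF) hA'F, by omega, M',
      (link_linkHypergraph hvA'.symm).symm ▸ hM'link, hM'disj, le_trans ?_ hM'bound⟩
    rw [hcard, show ((n + 1 : ℕ) : ℝ) - (A'.card + 1 : ℕ) = n - A'.card by push_cast; ring]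
    exact div_le_div_of_nonneg_right hlink
      (sub_nonneg.2 (by exact_mod_cast (by omega : A'.card ≤ n)))

end FinHypergraph

/-- Proposition `matchingclaim`: if `F` is a `k`-uniform hypergraph
with at least one edge, then there exists `A ⊆ V(F)` with `|A| ≤ k-1` such that the
link `L_F(A)` contains a matching of size at least `|F|^{1/k}/(k-|A|)`. -/
theorem statement_5 (k : ℕ) (hk : 1 ≤ k) (V : Type) [DecidableEq V]
    (F : FinHypergraph V) (hunif : ∀ e ∈ F.edges, e.card = k)
    (hne : F.edges.Nonempty) :
    ∃ A ⊆ F.verts, A.card ≤ k - 1 ∧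
      ∃ M ⊆ F.link A, (∀ e₁ ∈ M, ∀ e₂ ∈ M, e₁ ≠ e₂ → Disjoint e₁ e₂) ∧
        (F.edges.card : ℝ) ^ ((1 : ℝ) / k) / ((k : ℝ) - A.card) ≤ (M.card : ℝ) := by
  obtain ⟨A, hAF, hAcard, M, hMA, hMdisj, hbound⟩ :=
    FinHypergraph.exists_large_matching_in_link hk F hunif hne
  exact ⟨A, hAF, hAcard, M, hMA, fun _ h₁ _ h₂ h ↦ hMdisj h₁ h₂ h, hbound⟩
end

section
/- Let a, b, m ≥ 1 be fixed reals. Then there exists D > 0 (depending only on a, b, m) such that the following holds for every g > 0 and every d₀ > 0: define sequences d_t and s_t by s₀ = d₀^{a/b}·g, d_{t+1} = d_t/2^b + d_t^{1−1/m}, and s_{t+1} = s_t/2^a + d_t^{a/b − 1/m}. Then for every t ≥ 0 with d_t ≥ D, one has d_t ≤ 2·d₀·2^{−bt} and s_t ≤ d_t^{a/b}·g + d_t^{a/b − 1/(2m)}. -/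
/-!
Write `d_{t+1} = 2^{-b} d_t (1 + 2^b d_t^{-1/m})`. For `D` large the interval `(0, D)` is
invariant, so `D ≤ d_t` gives `D ≤ d_u` for all `u ≤ t`, and on `[D, ∞)` one step contracts
by `3/4`. Choosing `K ((4/3)^{1/m} - 1) ≥ 2^b`, the potential `ψ(x) = x exp(-K x^{-1/m})` then
shrinks by the factor `2^{-b}` per step, because the contraction raises `x^{-1/m}` by the factor
`(4/3)^{1/m}`, which pays for `1 + 2^b x^{-1/m} ≤ exp(2^b x^{-1/m})`; since `x/2 ≤ ψ(x) ≤ x` on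
`[D, ∞)`, this gives the bound on `d_t`.
The bound on `s_t` is an induction: from `2^{-b} d_t ≤ d_{t+1} ≤ d_t` the power `d^e`,
`e = a/b - 1/(2m)`, shrinks by at most the factor `min 1 (2^{-be})`, which exceeds `2^{-a}` by a
margin that absorbs the new term `d_t^{a/b-1/m} = d_t^e d_t^{-1/(2m)}`.
-/

open Real Filter

noncomputable section

namespace HalvingRecursion

def step (b m x : ℝ) : ℝ := x / 2 ^ b + x ^ (1 - 1 / m)

def potential (K m x : ℝ) : ℝ := x * exp (-(K * x ^ (-(1 / m))))

section Step

variable {b m D K x : ℝ}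

lemma step_pos (hx : 0 < x) : 0 < step b m x := by
  unfold step; positivity

lemma step_eq_mul (hx : 0 < x) : step b m x = x * (2 ^ (-b) + x ^ (-(1 / m))) := by
  rw [step, mul_add, rpow_neg zero_le_two, ← div_eq_mul_inv, sub_eq_add_neg, rpow_add hx,
    rpow_one]

lemma two_rpow_neg_mul_le_step (hx : 0 ≤ x) : 2 ^ (-b) * x ≤ step b m x := by
  rw [step, rpow_neg zero_le_two, inv_mul_eq_div]
  exact le_add_of_nonneg_right (rpow_nonneg hx _)

lemma two_rpow_neg_le_half (hb : 1 ≤ b) : (2 : ℝ) ^ (-b) ≤ 1 / 2 :=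
  calc (2 : ℝ) ^ (-b) ≤ 2 ^ (-1 : ℝ) := rpow_le_rpow_of_exponent_le one_le_two (by linarith)
    _ = 1 / 2 := by norm_num [rpow_neg_one]

lemma step_le_of_le (hb : 1 ≤ b) (hm : 0 < m) (hD : 0 < D) (hD4 : D ^ (-(1 / m)) ≤ 1 / 4)
    (hx : D ≤ x) : step b m x ≤ 3 / 4 * x := by
  have hx0 : 0 < x := hD.trans_le hx
  have hxD : x ^ (-(1 / m)) ≤ D ^ (-(1 / m)) :=
    rpow_le_rpow_of_nonpos hD hx (neg_nonpos.2 (by positivity))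
  rw [step_eq_mul hx0, mul_comm (3 / 4)]
  exact mul_le_mul_of_nonneg_left (by linarith [two_rpow_neg_le_half hb]) hx0.le

lemma step_lt_of_lt (hb : 1 ≤ b) (hm : 1 ≤ m) (hD : 0 < D) (hD4 : D ^ (-(1 / m)) ≤ 1 / 4)
    (hx0 : 0 ≤ x) (hx : x < D) : step b m x < D := by
  have hexp : 0 ≤ 1 - 1 / m := sub_nonneg.2 ((div_le_one (by linarith)).2 hm)
  calc step b m x < step b m D :=
        add_lt_add_of_lt_of_le (div_lt_div_of_pos_right hx (by positivity))
          (rpow_le_rpow hx0 hx.le hexp)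
    _ ≤ 3 / 4 * D := step_le_of_le hb (by linarith) hD hD4 le_rfl
    _ < D := by linarith

lemma potential_le_self (hK : 0 ≤ K) (hx : 0 ≤ x) : potential K m x ≤ x := by
  unfold potential
  refine mul_le_of_le_one_right hx (exp_le_one_iff.2 ?_)
  have := rpow_nonneg hx (-(1 / m))
  nlinarith

lemma half_le_potential (hK : 0 ≤ K) (hm : 0 < m) (hD : 0 < D)
    (hKD : K * D ^ (-(1 / m)) ≤ log 2) (hx : D ≤ x) : x / 2 ≤ potential K m x := by
  have hx0 : 0 < x := hD.trans_le hx
  have hxD : x ^ (-(1 / m)) ≤ D ^ (-(1 / m)) :=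
    rpow_le_rpow_of_nonpos hD hx (neg_nonpos.2 (by positivity))
  have : (2 : ℝ)⁻¹ ≤ exp (-(K * x ^ (-(1 / m)))) := by
    rw [← exp_log (two_pos (α := ℝ)), ← exp_neg, exp_le_exp]
    nlinarith [mul_le_mul_of_nonneg_left hxD hK]
  rw [potential, div_eq_mul_inv]
  exact mul_le_mul_of_nonneg_left this hx0.le

lemma potential_step_le (hb : 1 ≤ b) (hm : 0 < m) (hD : 0 < D) (hD4 : D ^ (-(1 / m)) ≤ 1 / 4)
    (hK0 : 0 ≤ K) (hK : 2 ^ b ≤ K * ((4 / 3 : ℝ) ^ (1 / m) - 1)) (hx : D ≤ x) :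
    potential K m (step b m x) ≤ 2 ^ (-b) * potential K m x := by
  have hx0 : 0 < x := hD.trans_le hx
  set y := x ^ (-(1 / m)) with hy_def
  have hy : 0 ≤ y := rpow_nonneg hx0.le _
  have hgrow : (4 / 3 : ℝ) ^ (1 / m) * y ≤ step b m x ^ (-(1 / m)) :=
    calc (4 / 3 : ℝ) ^ (1 / m) * y = (3 / 4 * x) ^ (-(1 / m)) := by
          rw [mul_rpow (by norm_num) hx0.le, rpow_neg (by norm_num), ← inv_rpow (by norm_num),
            show ((3 : ℝ) / 4)⁻¹ = 4 / 3 by norm_num]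
      _ ≤ step b m x ^ (-(1 / m)) :=
          rpow_le_rpow_of_nonpos (step_pos hx0) (step_le_of_le hb hm hD hD4 hx)
            (neg_nonpos.2 (by positivity))
  have hstep : step b m x ≤ 2 ^ (-b) * x * exp (2 ^ b * y) := by
    have h2 : (2 : ℝ) ^ (-b) * 2 ^ b = 1 := by rw [← rpow_add two_pos]; simp
    calc step b m x = 2 ^ (-b) * x * (2 ^ b * y + 1) := by
          rw [step_eq_mul hx0]; linear_combination (-(x * y)) * h2
      _ ≤ 2 ^ (-b) * x * exp (2 ^ b * y) := by gcongr; exact add_one_le_exp _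
  calc potential K m (step b m x)
      ≤ 2 ^ (-b) * x * exp (2 ^ b * y) * exp (-(K * ((4 / 3 : ℝ) ^ (1 / m) * y))) := by
        unfold potential; gcongr
    _ = 2 ^ (-b) * (x * exp (2 ^ b * y - K * ((4 / 3 : ℝ) ^ (1 / m) * y))) := by
        rw [mul_assoc, ← exp_add]; ring_nf
    _ ≤ 2 ^ (-b) * potential K m x := by
        rw [potential, ← hy_def]; gcongr; nlinarith

end Step

lemma min_one_rpow_mul_rpow_le {c x y e : ℝ} (hc : 0 < c) (hx : 0 < x) (hcy : c * x ≤ y)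
    (hyx : y ≤ x) : min 1 (c ^ e) * x ^ e ≤ y ^ e := by
  have hy : 0 < y := (mul_pos hc hx).trans_le hcy
  rcases le_or_gt 0 e with he | he
  · calc min 1 (c ^ e) * x ^ e ≤ c ^ e * x ^ e := by gcongr; exact min_le_right _ _
      _ = (c * x) ^ e := (mul_rpow hc.le hx.le).symm
      _ ≤ y ^ e := rpow_le_rpow (by positivity) hcy he
  · calc min 1 (c ^ e) * x ^ e ≤ 1 * x ^ e := by gcongr; exact min_le_left _ _
      _ = x ^ e := one_mul _
      _ ≤ y ^ e := rpow_le_rpow_of_nonpos hy hyx he.le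

lemma div_add_rpow_le_of_le_add_rpow {a b m D g s x y : ℝ} (ha : 0 ≤ a) (hb : 0 < b)
    (hm : 0 < m) (hD : 0 < D) (hg : 0 ≤ g)
    (hmargin : 2 ^ (-a) + D ^ (-(1 / (2 * m))) ≤ min 1 ((2 ^ (-b)) ^ (a / b - 1 / (2 * m))))
    (hDx : D ≤ x) (hxy : 2 ^ (-b) * x ≤ y) (hyx : y ≤ x)
    (hs : s ≤ x ^ (a / b) * g + x ^ (a / b - 1 / (2 * m))) :
    s / 2 ^ a + x ^ (a / b - 1 / m) ≤ y ^ (a / b) * g + y ^ (a / b - 1 / (2 * m)) := by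
  have hx : 0 < x := hD.trans_le hDx
  set e := a / b - 1 / (2 * m)
  have hlead : x ^ (a / b) * 2 ^ (-a) ≤ y ^ (a / b) :=
    calc x ^ (a / b) * 2 ^ (-a) = (2 ^ (-b) * x) ^ (a / b) := by
          rw [mul_rpow (by positivity) hx.le, ← rpow_mul zero_le_two, mul_comm,
            neg_mul, mul_div_cancel₀ _ hb.ne']
      _ ≤ y ^ (a / b) := rpow_le_rpow (by positivity) hxy (by positivity)
  have hsplit : x ^ (a / b - 1 / m) = x ^ e * x ^ (-(1 / (2 * m))) := by
    rw [← rpow_add hx]; congr 1; ring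
  have hxD : x ^ (-(1 / (2 * m))) ≤ D ^ (-(1 / (2 * m))) :=
    rpow_le_rpow_of_nonpos hD hDx (neg_nonpos.2 (by positivity))
  have hcorr := min_one_rpow_mul_rpow_le (e := e) (by positivity) hx hxy hyx
  have hxe : 0 ≤ x ^ e := rpow_nonneg hx.le e
  rw [rpow_neg zero_le_two] at hlead hmargin
  rw [div_eq_mul_inv, hsplit]
  calc s * (2 ^ a)⁻¹ + x ^ e * x ^ (-(1 / (2 * m)))
      ≤ (x ^ (a / b) * g + x ^ e) * (2 ^ a)⁻¹ + x ^ e * D ^ (-(1 / (2 * m))) := by gcongr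
    _ = x ^ (a / b) * (2 ^ a)⁻¹ * g + ((2 ^ a)⁻¹ + D ^ (-(1 / (2 * m)))) * x ^ e := by ring
    _ ≤ y ^ (a / b) * g + y ^ e :=
        add_le_add (by gcongr) ((mul_le_mul_of_nonneg_right hmargin hxe).trans hcorr)

section Sequence

variable {b m D K : ℝ} {d : ℕ → ℝ}

lemma pos_of_step (hrec : ∀ t, d (t + 1) = step b m (d t)) (h0 : 0 < d 0) (t : ℕ) :
    0 < d t := by
  induction t with
  | zero => exact h0
  | succ t ih => rw [hrec]; exact step_pos ih

lemma le_of_le_of_step (hrec : ∀ t, d (t + 1) = step b m (d t)) (h0 : 0 < d 0) (hb : 1 ≤ b)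
    (hm : 1 ≤ m) (hD : 0 < D) (hD4 : D ^ (-(1 / m)) ≤ 1 / 4) {u t : ℕ} (hut : u ≤ t)
    (ht : D ≤ d t) : D ≤ d u := by
  by_contra! hu
  have hlt : ∀ n, u ≤ n → d n < D := by
    intro n hn
    induction n, hn using Nat.le_induction with
    | base => exact hu
    | succ n _ ih => rw [hrec]; exact step_lt_of_lt hb hm hD hD4 (pos_of_step hrec h0 n).le ih
  exact (hlt t hut).not_ge ht

lemma potential_le_pow_mul (hrec : ∀ t, d (t + 1) = step b m (d t)) (h0 : 0 < d 0)
    (hb : 1 ≤ b) (hm : 1 ≤ m) (hD : 0 < D) (hD4 : D ^ (-(1 / m)) ≤ 1 / 4) (hK0 : 0 ≤ K)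
    (hK : 2 ^ b ≤ K * ((4 / 3 : ℝ) ^ (1 / m) - 1)) (t : ℕ) (ht : D ≤ d t) :
    potential K m (d t) ≤ (2 ^ (-b)) ^ t * potential K m (d 0) := by
  induction t with
  | zero => simp
  | succ n ih =>
    have hn : D ≤ d n := le_of_le_of_step hrec h0 hb hm hD hD4 n.le_succ ht
    calc potential K m (d (n + 1)) ≤ 2 ^ (-b) * potential K m (d n) := by
          rw [hrec]; exact potential_step_le hb (by linarith) hD hD4 hK0 hK hn
      _ ≤ 2 ^ (-b) * ((2 ^ (-b)) ^ n * potential K m (d 0)) := by gcongr; exact ih hn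
      _ = (2 ^ (-b)) ^ (n + 1) * potential K m (d 0) := by ring

lemma le_add_rpow_of_step {a g : ℝ} {s : ℕ → ℝ} (hrec : ∀ t, d (t + 1) = step b m (d t))
    (h0 : 0 < d 0) (ha : 0 ≤ a) (hb : 1 ≤ b) (hm : 1 ≤ m) (hD : 0 < D)
    (hD4 : D ^ (-(1 / m)) ≤ 1 / 4) (hg : 0 ≤ g)
    (hmargin : 2 ^ (-a) + D ^ (-(1 / (2 * m))) ≤ min 1 ((2 ^ (-b)) ^ (a / b - 1 / (2 * m))))
    (hs0 : s 0 = d 0 ^ (a / b) * g)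
    (hsrec : ∀ t, s (t + 1) = s t / 2 ^ a + d t ^ (a / b - 1 / m)) (t : ℕ) (ht : D ≤ d t) :
    s t ≤ d t ^ (a / b) * g + d t ^ (a / b - 1 / (2 * m)) := by
  induction t with
  | zero => rw [hs0]; exact le_add_of_nonneg_right (rpow_nonneg h0.le _)
  | succ n ih =>
    have hn : D ≤ d n := le_of_le_of_step hrec h0 hb hm hD hD4 n.le_succ ht
    have hdn : 0 < d n := pos_of_step hrec h0 n
    rw [hsrec, hrec]
    exact div_add_rpow_le_of_le_add_rpow ha (by linarith) (by linarith) hD hg hmargin hn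
      (two_rpow_neg_mul_le_step hdn.le)
      ((step_le_of_le hb (by linarith) hD hD4 hn).trans (by linarith)) (ih hn)

end Sequence

lemma eventually_rpow_neg_le {p ε : ℝ} (hp : 0 < p) (hε : 0 < ε) :
    ∀ᶠ D in atTop, D ^ (-p) ≤ ε :=
  ((tendsto_rpow_neg_atTop hp).eventually_lt_const hε).mono fun _ => le_of_lt

lemma two_rpow_neg_lt_min {a b m : ℝ} (ha : 0 < a) (hb : 0 < b) (hm : 0 < m) :
    (2 : ℝ) ^ (-a) < min 1 ((2 ^ (-b)) ^ (a / b - 1 / (2 * m))) := by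
  refine lt_min (rpow_lt_one_of_one_lt_of_neg one_lt_two (by linarith)) ?_
  have hexp : -b * (a / b - 1 / (2 * m)) = -a + b / (2 * m) := by field_simp; ring
  rw [← rpow_mul zero_le_two, hexp]
  exact rpow_lt_rpow_of_exponent_lt one_lt_two (by linarith [show 0 < b / (2 * m) by positivity])

end HalvingRecursion

end

open HalvingRecursion in
/-- Proposition `seqclaim`: let `a, b, m ≥ 1` be fixed reals. Then
there exists `D > 0` (depending only on `a, b, m`) such that for every `g > 0` and
`d₀ > 0`, if the sequences `d_t`, `s_t` satisfy `d 0 = d₀`, `s 0 = d₀^{a/b} g`,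
`d_{t+1} = d_t/2^b + d_t^{1-1/m}` and `s_{t+1} = s_t/2^a + d_t^{a/b-1/m}`, then for
every `t` with `d_t ≥ D` one has `d_t ≤ 2 d₀ 2^{-bt}` and
`s_t ≤ d_t^{a/b} g + d_t^{a/b - 1/(2m)}`. -/
theorem statement_9 (a b m : ℝ) (ha : 1 ≤ a) (hb : 1 ≤ b) (hm : 1 ≤ m) :
    ∃ D : ℝ, 0 < D ∧ ∀ g : ℝ, 0 < g → ∀ d₀ : ℝ, 0 < d₀ →
      ∀ d s : ℕ → ℝ, d 0 = d₀ → s 0 = d₀ ^ (a / b) * g →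
      (∀ t : ℕ, d (t + 1) = d t / 2 ^ b + d t ^ (1 - 1 / m)) →
      (∀ t : ℕ, s (t + 1) = s t / 2 ^ a + d t ^ (a / b - 1 / m)) →
      ∀ t : ℕ, D ≤ d t →
        d t ≤ 2 * d₀ * 2 ^ (-(b * t)) ∧
        s t ≤ d t ^ (a / b) * g + d t ^ (a / b - 1 / (2 * m)) := by
  have hm0 : 0 < m := by linarith
  have hgrowth : 0 < (4 / 3 : ℝ) ^ (1 / m) - 1 :=
    sub_pos.2 (one_lt_rpow (by norm_num) (by positivity))
  obtain ⟨K, hK, hKgrowth⟩ : ∃ K : ℝ, 0 < K ∧ 2 ^ b ≤ K * ((4 / 3 : ℝ) ^ (1 / m) - 1) :=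
    ⟨2 ^ b / ((4 / 3 : ℝ) ^ (1 / m) - 1), by positivity, (div_mul_cancel₀ _ hgrowth.ne').ge⟩
  have hmargin := two_rpow_neg_lt_min (by linarith : 0 < a) (by linarith : 0 < b) hm0
  obtain ⟨D, hD, hD4, hKD, hDmargin⟩ := ((eventually_gt_atTop 0).and
    ((eventually_rpow_neg_le (p := 1 / m) (by positivity) (by norm_num : (0 : ℝ) < 1 / 4)).and
    ((eventually_rpow_neg_le (p := 1 / m) (by positivity) (div_pos (log_pos one_lt_two) hK)).and
    (eventually_rpow_neg_le (p := 1 / (2 * m)) (by positivity) (sub_pos.2 hmargin))))).exists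
  refine ⟨D, hD, fun g hg d₀ hd₀ d s hd0 hs0 hrec hsrec t ht => ⟨?_, ?_⟩⟩
  · have hpos : 0 < d 0 := hd0 ▸ hd₀
    calc d t ≤ 2 * potential K m (d t) := by
          linarith [half_le_potential hK.le hm0 hD (by rwa [le_div_iff₀' hK] at hKD) ht]
      _ ≤ 2 * ((2 ^ (-b)) ^ t * potential K m (d 0)) := by
          gcongr; exact potential_le_pow_mul hrec hpos hb hm hD hD4 hK.le hKgrowth t ht
      _ ≤ 2 * ((2 ^ (-b)) ^ t * d 0) := by gcongr; exact potential_le_self hK.le hpos.le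
      _ = 2 * d₀ * 2 ^ (-(b * t)) := by
          rw [hd0, ← rpow_natCast, ← rpow_mul zero_le_two, neg_mul]; ring
  · exact le_add_rpow_of_step hrec (hd0 ▸ hd₀) (by linarith) hb hm hD hD4 hg.le
      (by linarith) (by rw [hs0, hd0]) hsrec t ht
end
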